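/- arXiv:1201.3897 — 3 statements merged into one kernel-verified Lean document; each statement's English description precedes it below -/
import Mathlib

section
/- If a decomposition G of a compact metric space X is shrinkable, then the quotient map π: X → X/G is a uniform limit of homeomorphisms; in particular X/G is homeomorphic to X. -/
/-!
Bing's argument. Write `π` for the quotient map. Shrinkability lets us replace any map `π ∘ φ`
(`φ` a homeomorphism of `X`) by a uniformly close map `π ∘ φ'` all of whose fibres are small.
Iterating with rapidly decreasing steps gives a uniformly Cauchy sequence `fₙ = π ∘ φₙ`; each step
is chosen below a modulus of injectivity of the previous map (available by compactness because
the fibres of `fₙ` are small), so the uniform limit is injective. It is also surjective and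
continuous, hence a homeomorphism from the compact space `X` onto the Hausdorff space `X/G`,
and it is as close to `π` as we like. The metric on `X/G` needed for all this exists because a
closed quotient of a compact metric space is normal, T₁ and (as `π` is a perfect map) second
countable.
-/

open Set Filter Topology Function

section ClosedMap

variable {X Y : Type*} [TopologicalSpace X] [TopologicalSpace Y] {f : X → Y}

theorem IsClosedMap.t1Space [T1Space X] (hf : IsClosedMap f) (hsurj : Surjective f) :
    T1Space Y where
  t1 y := by
    obtain ⟨x, rfl⟩ := hsurj y
    simpa using hf _ (isClosed_singleton (x := x))

theorem IsClosedMap.normalSpace [NormalSpace X] (hf : IsClosedMap f) (hcont : Continuous f)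
    (hsurj : Surjective f) : NormalSpace Y where
  normal s t hs ht hst := by
    obtain ⟨U, V, hU, hV, hsU, htV, hUV⟩ :=
      normal_separation (hs.preimage hcont) (ht.preimage hcont) (hst.preimage f)
    refine ⟨kernImage f U, kernImage f V, isClosedMap_iff_kernImage.1 hf hU,
      isClosedMap_iff_kernImage.1 hf hV, subset_kernImage_iff.2 hsU,
      subset_kernImage_iff.2 htV, disjoint_left.2 fun y hyU hyV => ?_⟩
    obtain ⟨x, rfl⟩ := hsurj y
    exact disjoint_left.1 hUV (hyU rfl) (hyV rfl)

theorem IsProperMap.secondCountableTopology [SecondCountableTopology X] (hf : IsProperMap f)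
    (hsurj : Surjective f) : SecondCountableTopology Y := by
  obtain ⟨B, hBc, -, hB⟩ := TopologicalSpace.exists_countable_basis X
  refine (TopologicalSpace.isTopologicalBasis_of_isOpen_of_nhds
    (s := (kernImage f ∘ sUnion) '' {S | S.Finite ∧ S ⊆ B}) ?_ ?_).secondCountableTopology
    ((countable_ofPred_finite_subset hBc).image _)
  · rintro _ ⟨S, ⟨-, hSB⟩, rfl⟩
    exact isClosedMap_iff_kernImage.1 hf.isClosedMap
      (isOpen_sUnion fun t ht => hB.isOpen (hSB ht))
  · intro y U hyU hU
    have hfiber : f ⁻¹' {y} ⊆ ⋃ t ∈ {t ∈ B | t ⊆ f ⁻¹' U}, t := by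
      rw [← sUnion_eq_biUnion, ← hB.open_eq_sUnion' (hU.preimage hf.continuous)]
      exact preimage_mono (singleton_subset_iff.2 hyU)
    obtain ⟨S, hSsub, hSfin, hcover⟩ :=
      (hf.isCompact_preimage isCompact_singleton).elim_finite_subcover_image
        (fun t ht => hB.isOpen ht.1) hfiber
    refine ⟨kernImage f (⋃₀ S), ⟨S, ⟨hSfin, fun t ht => (hSsub ht).1⟩, rfl⟩,
      fun x hx => ?_, ?_⟩
    · rw [← sUnion_eq_biUnion] at hcover
      exact hcover hx
    · calc kernImage f (⋃₀ S) ⊆ kernImage f (f ⁻¹' U) :=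
            kernImage_mono (sUnion_subset fun t ht => (hSsub ht).2)
        _ = U := kernImage_preimage_eq_iff.2 (by simp [hsurj.range_eq])

end ClosedMap

section Approximation

variable {X Y : Type*} [MetricSpace X] [MetricSpace Y]

theorem Continuous.exists_pos_dist_lt_imp_dist_lt [CompactSpace X] {f : X → Y}
    (hf : Continuous f) {δ : ℝ} (hfib : ∀ a b, f a = f b → dist a b < δ) :
    ∃ η > 0, ∀ a b, dist (f a) (f b) < η → dist a b < δ := by
  set K : Set (X × X) := {p | δ ≤ dist p.1 p.2}
  have hK : IsCompact K := (isClosed_le continuous_const continuous_dist).isCompact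
  have hφ : Continuous fun p : X × X => dist (f p.1) (f p.2) := by fun_prop
  rcases K.eq_empty_or_nonempty with hK₀ | hKne
  · refine ⟨1, one_pos, fun a b _ => not_le.1 fun hab => ?_⟩
    exact hK₀.subset (show (a, b) ∈ K from hab)
  obtain ⟨q, hqK, hqmin⟩ := hK.exists_isMinOn hKne hφ.continuousOn
  refine ⟨dist (f q.1) (f q.2), dist_pos.2 fun hq => (hfib _ _ hq).not_ge hqK,
    fun a b hab => not_le.1 fun hδab => (hqmin (show (a, b) ∈ K from hδab)).not_gt hab⟩

theorem exists_tendstoUniformly_of_dist_succ_le {α : Type*} [CompleteSpace Y] {u : ℕ → α → Y}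
    {d : ℕ → ℝ} (hd : ∀ n, d (n + 1) ≤ d n / 2) (hu : ∀ n x, dist (u n x) (u (n + 1) x) ≤ d n) :
    ∃ F : α → Y, TendstoUniformly u F atTop ∧ ∀ n x, dist (u n x) (F x) ≤ 2 * d n := by
  have hgeom : ∀ n m, d (m + n) ≤ d n / 2 ^ m := by
    intro n m
    induction m with
    | zero => simp
    | succ m ih =>
      rw [add_right_comm, pow_succ, ← div_div]
      exact (hd _).trans (by linarith)
  have hshift : ∀ n x m, dist (u (m + n) x) (u (m + 1 + n) x) ≤ 2 * d n / 2 / 2 ^ m := by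
    intro n x m
    rw [mul_div_cancel_left₀ _ two_ne_zero, add_right_comm]
    exact (hu _ x).trans (hgeom n m)
  choose F hF using fun x => cauchySeq_tendsto_of_complete
    (cauchySeq_of_le_geometric_two (C := 2 * d 0) (hshift 0 x))
  have hbound : ∀ n x, dist (u n x) (F x) ≤ 2 * d n := fun n x => by
    simpa using dist_le_of_le_geometric_two_of_tendsto₀ (C := 2 * d n) (hshift n x)
      ((hF x).comp (tendsto_add_atTop_nat n))
  refine ⟨F, Metric.tendstoUniformly_iff.2 fun ε hε => ?_, hbound⟩
  have hlim : Tendsto (fun n : ℕ => 2 * (d 0 / 2 ^ n)) atTop (𝓝 0) := by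
    simpa using ((tendsto_const_nhds (x := d 0)).div_atTop
      (tendsto_pow_atTop_atTop_of_one_lt (one_lt_two (α := ℝ)))).const_mul 2
  filter_upwards [hlim.eventually (gt_mem_nhds hε)] with n hn x
  calc dist (F x) (u n x) ≤ 2 * d n := dist_comm (F x) _ ▸ hbound n x
    _ ≤ 2 * (d 0 / 2 ^ n) := by gcongr; simpa using hgeom 0 n
    _ < ε := hn

theorem TendstoUniformly.surjective {α ι : Type*} [TopologicalSpace α] [CompactSpace α]
    {p : Filter ι} [p.NeBot] {u : ι → α → Y} {F : α → Y} (hu : TendstoUniformly u F p)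
    (hsurj : ∀ n, Surjective (u n)) (hF : Continuous F) :
    Surjective F := by
  intro y
  suffices y ∈ closure (range F) by rwa [(isCompact_range hF).isClosed.closure_eq] at this
  refine Metric.mem_closure_iff.2 fun ε hε => ?_
  obtain ⟨n, hn⟩ := (Metric.tendstoUniformly_iff.1 hu ε hε).exists
  obtain ⟨x, rfl⟩ := hsurj n y
  exact ⟨F x, mem_range_self x, dist_comm (F x) _ ▸ hn x⟩

variable [CompactSpace X]

theorem exists_refining_seq {A : Set (X → Y)} (hcont : ∀ f ∈ A, Continuous f)
    (hrefine : ∀ f ∈ A, ∀ ε > 0, ∀ δ > 0,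
      ∃ f' ∈ A, (∀ x, dist (f x) (f' x) ≤ ε) ∧ ∀ a b, f' a = f' b → dist a b < δ)
    {f : X → Y} (hf : f ∈ A) {ε : ℝ} (hε : 0 < ε) :
    ∃ (u : ℕ → X → Y) (d : ℕ → ℝ), u 0 = f ∧ d 0 = ε ∧ (∀ n, u n ∈ A) ∧
      (∀ n, d (n + 1) ≤ d n / 2) ∧ (∀ n x, dist (u n x) (u (n + 1) x) ≤ d n) ∧
      ∀ n a b, dist (u (n + 1) a) (u (n + 1) b) ≤ 4 * d (n + 1) → dist a b < 1 / (n + 1) := by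
  have hrefine' : ∀ f ∈ A, ∀ ε > 0, ∀ δ > 0, ∃ f' ∈ A, ∃ η > 0,
      (∀ x, dist (f x) (f' x) ≤ ε) ∧ ∀ a b, dist (f' a) (f' b) < η → dist a b < δ := by
    intro f hf ε hε δ hδ
    obtain ⟨f', hf', hclose, hfib⟩ := hrefine f hf ε hε δ hδ
    obtain ⟨η, hη, hinj⟩ := (hcont f' hf').exists_pos_dist_lt_imp_dist_lt hfib
    exact ⟨f', hf', η, hη, hclose, hinj⟩
  choose! next hnextA η hη hclose hinj using hrefine'
  let δ : ℕ → ℝ := fun n => 1 / (n + 1)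
  have hδ : ∀ n, 0 < δ n := fun n => Nat.one_div_pos_of_nat
  -- Halving makes the sequence uniformly Cauchy; staying below `η / 5` makes its limit injective.
  let seq : ℕ → (X → Y) × ℝ := fun n => Nat.rec (f, ε)
    (fun n p => (next p.1 p.2 (δ n), min (p.2 / 2) (η p.1 p.2 (δ n) / 5))) n
  have hseq : ∀ n, (seq n).1 ∈ A ∧ 0 < (seq n).2 := by
    intro n
    induction n with
    | zero => exact ⟨hf, hε⟩
    | succ n ih =>
      have := hη _ ih.1 _ ih.2 _ (hδ n)
      exact ⟨hnextA _ ih.1 _ ih.2 _ (hδ n), lt_min (half_pos ih.2) (by positivity)⟩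
  refine ⟨fun n => (seq n).1, fun n => (seq n).2, rfl, rfl, fun n => (hseq n).1,
    fun n => min_le_left _ _, fun n => hclose _ (hseq n).1 _ (hseq n).2 _ (hδ n),
    fun n a b hab => hinj _ (hseq n).1 _ (hseq n).2 _ (hδ n) a b (hab.trans_lt ?_)⟩
  have hη_pos := hη _ (hseq n).1 _ (hseq n).2 _ (hδ n)
  have hd_le : (seq (n + 1)).2 ≤ η (seq n).1 (seq n).2 (δ n) / 5 := min_le_right _ _
  linarith

theorem exists_homeomorph_dist_lt_of_refining [CompleteSpace Y] {A : Set (X → Y)}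
    (hcont : ∀ f ∈ A, Continuous f) (hsurj : ∀ f ∈ A, Surjective f)
    (hrefine : ∀ f ∈ A, ∀ ε > 0, ∀ δ > 0,
      ∃ f' ∈ A, (∀ x, dist (f x) (f' x) ≤ ε) ∧ ∀ a b, f' a = f' b → dist a b < δ)
    {f : X → Y} (hf : f ∈ A) {ε : ℝ} (hε : 0 < ε) :
    ∃ Φ : X ≃ₜ Y, ∀ x, dist (Φ x) (f x) < ε := by
  obtain ⟨u, d, rfl, hd₀, huA, hd, hu, hfib⟩ :=
    exists_refining_seq hcont hrefine hf (div_pos hε four_pos)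
  obtain ⟨F, hF, hFu⟩ := exists_tendstoUniformly_of_dist_succ_le hd hu
  have hFc : Continuous F := hF.continuous (Frequently.of_forall fun n => hcont _ (huA n))
  have hinj : Injective F := by
    intro a b hab
    refine dist_le_zero.1 (le_of_forall_pos_lt_add fun δ hδ => ?_)
    obtain ⟨n, hn⟩ := exists_nat_one_div_lt hδ
    refine (hfib n a b ?_).trans (by linarith)
    calc dist (u (n + 1) a) (u (n + 1) b) ≤ dist (u (n + 1) a) (F a) + dist (u (n + 1) b) (F b) :=
          hab ▸ dist_triangle_right _ _ _
      _ ≤ 4 * d (n + 1) := by linarith [hFu (n + 1) a, hFu (n + 1) b]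
  let e : X ≃ Y := Equiv.ofBijective F ⟨hinj, hF.surjective (fun n => hsurj _ (huA n)) hFc⟩
  refine ⟨(show Continuous e from hFc).homeoOfEquivCompactToT2, fun x => ?_⟩
  calc dist (F x) (u 0 x) ≤ 2 * d 0 := dist_comm (F x) _ ▸ hFu 0 x
    _ < ε := by linarith

end Approximation

section Balls

variable {α : Type*} [PseudoMetricSpace α]

theorem dist_lt_of_mem_ball_half {x y c : α} {ε : ℝ} (hx : x ∈ Metric.ball c (ε / 2))
    (hy : y ∈ Metric.ball c (ε / 2)) : dist x y < ε := by
  linarith [dist_triangle_right x y c, Metric.mem_ball.1 hx, Metric.mem_ball.1 hy]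

theorem sUnion_range_ball {ρ : ℝ} (hρ : 0 < ρ) :
    ⋃₀ range (fun x : α => Metric.ball x ρ) = univ :=
  eq_univ_of_forall fun x => mem_sUnion.2 ⟨_, mem_range_self x, Metric.mem_ball_self hρ⟩

end Balls

section Shrinkable

variable {X Y : Type*} [MetricSpace X] [MetricSpace Y]

/-- Shrinkability, in metric form, of the decomposition of `X` into the fibres of `π`. -/
def IsShrinkable (π : X → Y) : Prop :=
  ∀ ε > 0, ∀ δ > 0, ∃ h : X ≃ₜ X,
    (∀ x, dist (π (h x)) (π x) < ε) ∧ ∀ a b, π a = π b → dist (h a) (h b) < δ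

theorem IsShrinkable.exists_refinement [CompactSpace X] {π : X → Y} (hπ : IsShrinkable π)
    (φ : X ≃ₜ X) {ε δ : ℝ} (hε : 0 < ε) (hδ : 0 < δ) :
    ∃ φ' : X ≃ₜ X, (∀ x, dist (π (φ x)) (π (φ' x)) < ε) ∧
      ∀ a b, π (φ' a) = π (φ' b) → dist a b < δ := by
  obtain ⟨δ', hδ', hφ⟩ := Metric.uniformContinuous_iff.1
    (CompactSpace.uniformContinuous_of_continuous φ.symm.continuous) δ hδ
  obtain ⟨h, hclose, hfib⟩ := hπ ε hε δ' hδ'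
  refine ⟨φ.trans h.symm, fun x => ?_, fun a b hab => ?_⟩
  · simpa using hclose (h.symm (φ x))
  · have hφab : dist (φ a) (φ b) < δ' := by simpa using hfib _ _ hab
    simpa using hφ hφab

theorem IsShrinkable.exists_homeomorph_dist_lt [CompactSpace X] [CompleteSpace Y] {π : X → Y}
    (hπ : IsShrinkable π) (hcont : Continuous π) (hsurj : Surjective π) {ε : ℝ} (hε : 0 < ε) :
    ∃ Φ : X ≃ₜ Y, ∀ x, dist (Φ x) (π x) < ε := by
  refine exists_homeomorph_dist_lt_of_refining (A := range fun φ : X ≃ₜ X => π ∘ φ)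
    ?_ ?_ ?_ ⟨Homeomorph.refl X, rfl⟩ hε
  · rintro _ ⟨φ, rfl⟩
    exact hcont.comp φ.continuous
  · rintro _ ⟨φ, rfl⟩
    exact hsurj.comp φ.surjective
  · rintro _ ⟨φ, rfl⟩ ε hε δ hδ
    obtain ⟨φ', hclose, hfib⟩ := hπ.exists_refinement φ hε hδ
    exact ⟨π ∘ φ', mem_range_self φ', fun x => (hclose x).le, hfib⟩

theorem isShrinkable_of_openCover {G : Set (Set X)} {π : X → Y}
    (hfib : ∀ a b, π a = π b → ∃ g ∈ G, a ∈ g ∧ b ∈ g)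
    (hshrink : ∀ (𝒰 : Set (Set Y)), (∀ U ∈ 𝒰, IsOpen U) → ⋃₀ 𝒰 = univ →
      ∀ (𝒱 : Set (Set X)), (∀ V ∈ 𝒱, IsOpen V) → ⋃₀ 𝒱 = univ →
      ∃ h : X ≃ₜ X,
        (∀ x : X, ∃ U ∈ 𝒰, x ∈ π ⁻¹' U ∧ h x ∈ π ⁻¹' U) ∧
        (∀ g ∈ G, ∃ V ∈ 𝒱, h '' g ⊆ V)) :
    IsShrinkable π := by
  intro ε hε δ hδ
  obtain ⟨h, hclose, hsmall⟩ :=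
    hshrink _ (forall_mem_range.2 fun _ => Metric.isOpen_ball) (sUnion_range_ball (half_pos hε))
      _ (forall_mem_range.2 fun _ => Metric.isOpen_ball) (sUnion_range_ball (half_pos hδ))
  refine ⟨h, fun x => ?_, fun a b hab => ?_⟩
  · obtain ⟨_, ⟨y, rfl⟩, hx, hhx⟩ := hclose x
    exact dist_lt_of_mem_ball_half hhx hx
  · obtain ⟨g, hg, ha, hb⟩ := hfib a b hab
    obtain ⟨_, ⟨c, rfl⟩, hgc⟩ := hsmall g hg
    exact dist_lt_of_mem_ball_half (hgc (mem_image_of_mem h ha)) (hgc (mem_image_of_mem h hb))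

end Shrinkable

theorem exists_mem_of_quot_mk_eq {X : Type*} {G : Set (Set X)} {r : X → X → Prop}
    (hcov : ∀ x : X, ∃ g ∈ G, x ∈ g)
    (hdisj : ∀ g ∈ G, ∀ g' ∈ G, g ≠ g' → Disjoint g g')
    (hr : ∀ x y, r x y ↔ ∃ g ∈ G, x ∈ g ∧ y ∈ g) {a b : X} (hab : Quot.mk r a = Quot.mk r b) :
    ∃ g ∈ G, a ∈ g ∧ b ∈ g := by
  have he : Equivalence r := by
    refine ⟨fun x => ?_, fun {x y} hxy => ?_, fun {x y z} hxy hyz => ?_⟩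
    · obtain ⟨g, hg, hx⟩ := hcov x
      exact (hr x x).2 ⟨g, hg, hx, hx⟩
    · obtain ⟨g, hg, hx, hy⟩ := (hr x y).1 hxy
      exact (hr y x).2 ⟨g, hg, hy, hx⟩
    · obtain ⟨g, hg, hx, hy⟩ := (hr x y).1 hxy
      obtain ⟨g', hg', hy', hz⟩ := (hr y z).1 hyz
      obtain rfl : g = g' := by_contra fun hne => disjoint_left.1 (hdisj g hg g' hg' hne) hy hy'
      exact (hr x z).2 ⟨g, hg, hx, hz⟩
  exact (hr a b).1 (he.eqvGen_iff.1 (Quot.eq.1 hab))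

theorem shrinkable_quotient_near_homeomorphism_general
    {X : Type*} [MetricSpace X] [CompactSpace X]
    (G : Set (Set X))
    (hcov : ∀ x : X, ∃ g ∈ G, x ∈ g)
    (hdisj : ∀ g ∈ G, ∀ g' ∈ G, g ≠ g' → Disjoint g g')
    (r : X → X → Prop)
    (hr : ∀ x y, r x y ↔ ∃ g ∈ G, x ∈ g ∧ y ∈ g)
    (husc : IsClosedMap (Quot.mk r))
    -- shrinkability:
    (hshrink : ∀ (𝒰 : Set (Set (Quot r))), (∀ U ∈ 𝒰, IsOpen U) → ⋃₀ 𝒰 = Set.univ →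
      ∀ (𝒱 : Set (Set X)), (∀ V ∈ 𝒱, IsOpen V) → ⋃₀ 𝒱 = Set.univ →
      ∃ h : X ≃ₜ X,
        (∀ x : X, ∃ U ∈ 𝒰, x ∈ Quot.mk r ⁻¹' U ∧ h x ∈ Quot.mk r ⁻¹' U) ∧
        (∀ g ∈ G, ∃ V ∈ 𝒱, h '' g ⊆ V)) :
    (∀ (𝒰 : Set (Set (Quot r))), (∀ U ∈ 𝒰, IsOpen U) → ⋃₀ 𝒰 = Set.univ →
      ∃ h : X ≃ₜ Quot r, ∀ x : X, ∃ U ∈ 𝒰, Quot.mk r x ∈ U ∧ h x ∈ U) ∧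
    Nonempty (X ≃ₜ Quot r) := by
  have hπ : Continuous (Quot.mk r) := continuous_quot_mk
  have hsurj : Surjective (Quot.mk r) := Quot.mk_surjective
  have := IsClosedMap.t1Space husc hsurj
  have := IsClosedMap.normalSpace husc hπ hsurj
  have := hπ.isProperMap.secondCountableTopology hsurj
  let := TopologicalSpace.metrizableSpaceMetric (Quot r)
  have hshrinkable : IsShrinkable (Quot.mk r) :=
    isShrinkable_of_openCover (fun a b => exists_mem_of_quot_mk_eq hcov hdisj hr) hshrink
  have happrox : ∀ ε > 0, ∃ Φ : X ≃ₜ Quot r, ∀ x, dist (Φ x) (Quot.mk r x) < ε :=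
    fun ε => hshrinkable.exists_homeomorph_dist_lt hπ hsurj
  refine ⟨fun 𝒰 hopen hcover => ?_, ⟨(happrox 1 one_pos).choose⟩⟩
  obtain ⟨δ, hδ, hleb⟩ := lebesgue_number_lemma_of_metric_sUnion isCompact_univ hopen hcover.ge
  obtain ⟨Φ, hΦ⟩ := happrox δ hδ
  refine ⟨Φ, fun x => ?_⟩
  obtain ⟨U, hU, hball⟩ := hleb (Quot.mk r x) (mem_univ _)
  exact ⟨U, hU, hball (Metric.mem_ball_self hδ), hball (Metric.mem_ball.2 (hΦ x))⟩

/-- If a (usc, into compact sets) decomposition `G` of a compact metric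
space `X` is shrinkable, then the quotient map `π : X → X/G` can be approximated by
homeomorphisms (arbitrarily closely with respect to any open cover of `X/G`); in
particular `X/G` is homeomorphic to `X`. -/
theorem shrinkable_quotient_near_homeomorphism
    {X : Type*} [MetricSpace X] [CompactSpace X]
    (G : Set (Set X))
    (hne : ∀ g ∈ G, g.Nonempty)
    (hcpt : ∀ g ∈ G, IsCompact g)
    (hcov : ∀ x : X, ∃ g ∈ G, x ∈ g)
    (hdisj : ∀ g ∈ G, ∀ g' ∈ G, g ≠ g' → Disjoint g g')
    (r : X → X → Prop)
    (hr : ∀ x y, r x y ↔ ∃ g ∈ G, x ∈ g ∧ y ∈ g)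
    (husc : IsClosedMap (Quot.mk r))
    -- shrinkability:
    (hshrink : ∀ (𝒰 : Set (Set (Quot r))), (∀ U ∈ 𝒰, IsOpen U) → ⋃₀ 𝒰 = Set.univ →
      ∀ (𝒱 : Set (Set X)), (∀ V ∈ 𝒱, IsOpen V) → ⋃₀ 𝒱 = Set.univ →
      ∃ h : X ≃ₜ X,
        (∀ x : X, ∃ U ∈ 𝒰, x ∈ Quot.mk r ⁻¹' U ∧ h x ∈ Quot.mk r ⁻¹' U) ∧
        (∀ g ∈ G, ∃ V ∈ 𝒱, h '' g ⊆ V)) :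
    (∀ (𝒰 : Set (Set (Quot r))), (∀ U ∈ 𝒰, IsOpen U) → ⋃₀ 𝒰 = Set.univ →
      ∃ h : X ≃ₜ Quot r, ∀ x : X, ∃ U ∈ 𝒰, Quot.mk r x ∈ U ∧ h x ∈ U) ∧
    Nonempty (X ≃ₜ Quot r) :=
  shrinkable_quotient_near_homeomorphism_general G hcov hdisj r hr husc hshrink
end

section
/- ℝⁿ, for n ≥ 3, has the disjoint arcs property: any two paths f, g: [0,1] → ℝⁿ can be approximated arbitrarily closely (in the sup metric) by paths with disjoint images. -/
open unitInterval Set Module Polynomial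

open scoped ContDiff

variable {E : Type*} [NormedAddCommGroup E] [NormedSpace ℝ E] [FiniteDimensional ℝ E]

/-- Weierstrass approximation of each coordinate in a basis; the uniform continuity of the
inverse coordinate map turns coordinatewise closeness into closeness in `E`. -/
theorem exists_contDiff_near_continuousMap (f : C(I, E)) {ε : ℝ} (hε : 0 < ε) :
    ∃ F : ℝ → E, ContDiff ℝ ∞ F ∧ ∀ t : I, dist (f t) (F t) < ε := by
  let L := (Module.finBasis ℝ E).equivFunL
  obtain ⟨δ, hδ, hL⟩ := Metric.uniformContinuous_iff.1 L.symm.lipschitz.uniformContinuous ε hε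
  choose p hp using fun i => exists_polynomial_near_continuousMap 0 1
    ⟨fun t => L (f t) i, by fun_prop⟩ δ hδ
  refine ⟨fun x => L.symm fun i => aeval x (p i),
    L.symm.contDiff.comp (contDiff_pi.2 fun i => contDiff_aeval (p i) ∞), fun t => ?_⟩
  rw [← L.symm_apply_apply (f t)]
  refine hL ((dist_pi_lt_iff hδ).2 fun i => ?_)
  rw [Real.dist_eq, abs_sub_comm]
  simpa using (ContinuousMap.norm_lt_iff _ hδ).1 (hp i) t

/-- The difference set `{F s - G t}` is the range of a `C¹` map on the plane, so by (the easy
case of) Sard's theorem its complement is dense once `E` has dimension at least three. -/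
theorem exists_small_translate_ne {F G : ℝ → E} (hE : 2 < finrank ℝ E)
    (hF : ContDiff ℝ 1 F) (hG : ContDiff ℝ 1 G) {ε : ℝ} (hε : 0 < ε) :
    ∃ v : E, ‖v‖ < ε ∧ ∀ s t, F s ≠ G t + v := by
  have hdense : Dense (range fun p : ℝ × ℝ => F p.1 - G p.2)ᶜ :=
    ((hF.comp contDiff_fst).sub (hG.comp contDiff_snd)).dense_compl_range_of_finrank_lt_finrank
      (by simpa using hE)
  obtain ⟨v, hvF, hv⟩ := hdense.exists_mem_open Metric.isOpen_ball ⟨0, Metric.mem_ball_self hε⟩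
  refine ⟨v, mem_ball_zero_iff.1 hv, fun s t hst => hvF ⟨(s, t), ?_⟩⟩
  simp [hst]

/-- ℝⁿ, n ≥ 3, has the disjoint arcs property: any two paths can be
approximated arbitrarily closely in the sup metric by paths with disjoint images. -/
theorem euclidean_disjoint_arcs_property (n : ℕ) (hn : 3 ≤ n)
    (f g : C(I, EuclideanSpace ℝ (Fin n))) (ε : ℝ) (hε : 0 < ε) :
    ∃ f' g' : C(I, EuclideanSpace ℝ (Fin n)),
      (∀ t, dist (f t) (f' t) < ε) ∧ (∀ t, dist (g t) (g' t) < ε) ∧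
      Set.range f' ∩ Set.range g' = ∅ := by
  obtain ⟨F, hF, hfF⟩ := exists_contDiff_near_continuousMap f (half_pos hε)
  obtain ⟨G, hG, hgG⟩ := exists_contDiff_near_continuousMap g (half_pos hε)
  obtain ⟨v, hv, hFG⟩ := exists_small_translate_ne (by rw [finrank_euclideanSpace_fin]; omega) (hF.of_le (by simp))
    (hG.of_le (by simp)) (half_pos hε)
  refine ⟨⟨fun t => F t, hF.continuous.comp continuous_subtype_val⟩,
    ⟨fun t => G t + v, (hG.continuous.comp continuous_subtype_val).add continuous_const⟩,
    fun t => (hfF t).trans (half_lt_self hε), fun t => ?_, ?_⟩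
  · calc dist (g t) (G t + v) ≤ dist (g t) (G t) + dist (G t) (G t + v) := dist_triangle _ _ _
      _ < ε / 2 + ε / 2 := by rw [dist_self_add_right]; exact add_lt_add (hgG t) hv
      _ = ε := add_halves ε
  · rw [eq_empty_iff_forall_notMem]
    rintro _ ⟨⟨s, rfl⟩, t, ht⟩
    exact hFG s t ht.symm
end

section
/- If G is a shrinkable upper semicontinuous decomposition of ℝⁿ into compact sets, then each element g ∈ G is cell-like. -/
/-!
Let `π` be the quotient map, `g ∈ G` and `U ⊇ g` open. Let `O₁` be an open neighbourhood of `π g`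
in the quotient with `π⁻¹ O₁ ⊆ U`, `C` a closed metric neighbourhood `cthickening (3ε) g` inside
`π⁻¹ O₁`, and `O₀` a neighbourhood of `π g` with `π⁻¹ O₀ ⊆ thickening ε g`. Shrink with respect to
the cover `{O₀, O₁ \ {π g}, (π C)ᶜ}` of the quotient and the cover of ℝⁿ by `ε`-balls. As `π g`
lies in `π C` and not in `O₁ \ {π g}`, closeness forces `h '' g` into `π⁻¹ O₀`, so the
`ε`-ball `B ⊇ h '' g` lies in `C`; and a point `w` with `h w ∈ C` lies over `O₀` or `O₁`,
so `h⁻¹ B ⊆ U`. Since `h⁻¹ B` is homeomorphic to the convex set `B`, `g` contracts inside `U`.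
-/

/-- A compact subset is cell-like if it contracts to a point in each of its
neighborhoods. -/
def IsCellLike {α : Type*} [TopologicalSpace α] (X : Set α) : Prop :=
  IsCompact X ∧ ∀ (U : Set α), IsOpen U → ∀ (hXU : X ⊆ U),
    ∃ u : U, ContinuousMap.Homotopic
      ⟨Set.inclusion hXU, continuous_inclusion hXU⟩ (ContinuousMap.const _ u)

open Set Metric

theorem IsClosedMap.exists_isOpen_mem_preimage_subset {X Y : Type*} [TopologicalSpace X]
    [TopologicalSpace Y] {π : X → Y} (hπ : IsClosedMap π) {y : Y} {W : Set X}
    (hW : IsOpen W) (hyW : π ⁻¹' {y} ⊆ W) : ∃ O, IsOpen O ∧ y ∈ O ∧ π ⁻¹' O ⊆ W := by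
  obtain ⟨N, hN, hNW⟩ := hπ.comap_nhds_le (hW.mem_nhdsSet.mpr hyW)
  obtain ⟨O, hON, hO, hyO⟩ := mem_nhds_iff.mp hN
  exact ⟨O, hO, hyO, (preimage_mono hON).trans hNW⟩

theorem nullhomotopic_inclusion_of_contractibleSpace {X : Type*} [TopologicalSpace X]
    {K W U : Set X} (hKW : K ⊆ W) (hWU : W ⊆ U) [ContractibleSpace W] :
    (ContinuousMap.inclusion (hKW.trans hWU)).Nullhomotopic :=
  ((id_nullhomotopic W).comp_left (ContinuousMap.inclusion hKW)).comp_right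
    (ContinuousMap.inclusion hWU)

theorem Homeomorph.contractibleSpace_preimage_of_convex {X E : Type*} [TopologicalSpace X]
    [AddCommGroup E] [Module ℝ E] [TopologicalSpace E] [ContinuousAdd E] [ContinuousSMul ℝ E]
    (h : X ≃ₜ E) {B : Set E} (hB : Convex ℝ B) (hBne : B.Nonempty) :
    ContractibleSpace (h ⁻¹' B) := by
  have := hB.contractibleSpace hBne
  rw [← h.image_symm]
  exact (h.symm.image B).symm.contractibleSpace

theorem preimage_quot_mk_singleton_of_pairwiseDisjoint {α : Type*} {G : Set (Set α)}
    (hdisj : G.PairwiseDisjoint id) {r : α → α → Prop}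
    (hr : ∀ x y, r x y ↔ ∃ g ∈ G, x ∈ g ∧ y ∈ g) {g : Set α} (hg : g ∈ G) {x₀ : α}
    (hx₀ : x₀ ∈ g) : Quot.mk r ⁻¹' {Quot.mk r x₀} = g := by
  have hsat : ∀ a b, Relation.EqvGen r a b → (a ∈ g ↔ b ∈ g) := by
    intro a b hab
    induction hab with
    | rel a b hab =>
      obtain ⟨g', hg', ha, hb⟩ := (hr a b).mp hab
      exact ⟨fun hag => hdisj.elim_set hg' hg a ha hag ▸ hb,
        fun hbg => hdisj.elim_set hg' hg b hb hbg ▸ ha⟩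
    | refl => rfl
    | symm _ _ _ ih => exact ih.symm
    | trans _ _ _ _ _ ih₁ ih₂ => exact ih₁.trans ih₂
  ext y
  refine ⟨fun hy => (hsat y x₀ (Quot.eq.mp hy)).mpr hx₀, fun hy => ?_⟩
  exact Quot.sound ((hr y x₀).mpr ⟨g, hg, hy, hx₀⟩)

theorem sUnion_insert_sdiff_compl_eq_univ {Y : Type*} {O₀ O₁ S : Set Y} {y : Y} (hy : y ∈ O₀)
    (hS : S ⊆ O₁) : ⋃₀ {O₀, O₁ \ {y}, Sᶜ} = univ := by
  refine eq_univ_of_forall fun q => ?_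
  by_cases hq : q = y
  · exact ⟨O₀, by simp, hq ▸ hy⟩
  by_cases hqS : q ∈ S
  · exact ⟨O₁ \ {y}, by simp, hS hqS, hq⟩
  · exact ⟨Sᶜ, by simp, hqS⟩

theorem Metric.ball_subset_thickening_of_mem_thickening {X : Type*} [PseudoMetricSpace X]
    {K : Set X} {z a : X} {ε : ℝ} (ha : a ∈ ball z ε) (haK : a ∈ thickening ε K) :
    ball z ε ⊆ thickening (3 * ε) K :=
  calc ball z ε ⊆ ball a (2 * ε) :=
        ball_subset_ball' (by rw [dist_comm]; linarith [mem_ball.mp ha])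
    _ ⊆ thickening (2 * ε) (thickening ε K) := ball_subset_thickening haK _
    _ ⊆ thickening (2 * ε + ε) K := thickening_thickening_subset _ _ _
    _ = thickening (3 * ε) K := by ring_nf

theorem exists_homeomorph_fiber_subset_ball_preimage_subset {X Y : Type*} [PseudoMetricSpace X]
    [TopologicalSpace Y] {π : X → Y} (hπ : Continuous π) (hπc : IsClosedMap π) {x₀ : X}
    (hclosed : IsClosed {π x₀}) (hK : IsCompact (π ⁻¹' {π x₀})) {U : Set X} (hU : IsOpen U)
    (hKU : π ⁻¹' {π x₀} ⊆ U)
    (hshrink : ∀ 𝒰 : Set (Set Y), (∀ O ∈ 𝒰, IsOpen O) → ⋃₀ 𝒰 = univ → ∀ ε > 0,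
      ∃ h : X ≃ₜ X, (∀ x, ∃ O ∈ 𝒰, π x ∈ O ∧ π (h x) ∈ O) ∧
        ∃ z, h '' (π ⁻¹' {π x₀}) ⊆ ball z ε) :
    ∃ (h : X ≃ₜ X) (z : X) (ε : ℝ), 0 < ε ∧
      h '' (π ⁻¹' {π x₀}) ⊆ ball z ε ∧ h ⁻¹' ball z ε ⊆ U := by
  set K := π ⁻¹' {π x₀}
  have hx₀K : x₀ ∈ K := rfl
  obtain ⟨O₁, hO₁, hx₀O₁, hO₁U⟩ := hπc.exists_isOpen_mem_preimage_subset hU hKU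
  obtain ⟨δ, hδ, hCO₁⟩ := hK.exists_cthickening_subset_open (hO₁.preimage hπ)
    fun x (hx : π x = π x₀) => show π x ∈ O₁ from hx ▸ hx₀O₁
  obtain ⟨ε, hε, rfl⟩ : ∃ ε > 0, δ = 3 * ε := ⟨δ / 3, by positivity, by ring⟩
  set C := cthickening (3 * ε) K
  obtain ⟨O₀, hO₀, hx₀O₀, hO₀K⟩ :=
    hπc.exists_isOpen_mem_preimage_subset isOpen_thickening (self_subset_thickening hε K)
  have hO₀O₁ : π ⁻¹' O₀ ⊆ π ⁻¹' O₁ :=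
    hO₀K.trans ((thickening_subset_cthickening_of_le (by linarith) K).trans hCO₁)
  let 𝒰 : Set (Set Y) := {O₀, O₁ \ {π x₀}, (π '' C)ᶜ}
  have h𝒰open : ∀ O ∈ 𝒰, IsOpen O := by
    simp only [𝒰, mem_insert_iff, mem_singleton_iff, forall_eq_or_imp, forall_eq]
    exact ⟨hO₀, hO₁.sdiff hclosed, (hπc C isClosed_cthickening).isOpen_compl⟩
  have h𝒰cover : ⋃₀ 𝒰 = univ :=
    sUnion_insert_sdiff_compl_eq_univ hx₀O₀ (image_subset_iff.mpr hCO₁)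
  obtain ⟨h, hclose, z, hKz⟩ := hshrink 𝒰 h𝒰open h𝒰cover ε hε
  simp only [𝒰, mem_insert_iff, mem_singleton_iff, exists_eq_or_imp, exists_eq_left] at hclose
  have hhK : ∀ x ∈ K, h x ∈ thickening ε K := by
    intro x (hx : π x = π x₀)
    rcases hclose x with h₀ | ⟨⟨-, hne⟩, -⟩ | ⟨hxC, -⟩
    · exact hO₀K h₀.2
    · exact absurd hx hne
    · exact absurd ⟨x, self_subset_cthickening K hx, rfl⟩ hxC
  have hballC : ball z ε ⊆ C :=
    (ball_subset_thickening_of_mem_thickening (hKz (mem_image_of_mem h hx₀K))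
      (hhK x₀ hx₀K)).trans (thickening_subset_cthickening _ _)
  refine ⟨h, z, ε, hε, hKz, fun w (hw : h w ∈ ball z ε) => ?_⟩
  rcases hclose w with ⟨hw₀, -⟩ | ⟨⟨hw₁, -⟩, -⟩ | ⟨-, hwC⟩
  · exact hO₁U (hO₀O₁ hw₀)
  · exact hO₁U hw₁
  · exact absurd ⟨h w, hballC hw, rfl⟩ hwC

theorem shrinkable_elements_cellLike_general {n : ℕ}
    (G : Set (Set (EuclideanSpace ℝ (Fin n))))
    (hne : ∀ g ∈ G, g.Nonempty)
    (hcpt : ∀ g ∈ G, IsCompact g)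
    (hdisj : ∀ g ∈ G, ∀ g' ∈ G, g ≠ g' → Disjoint g g')
    (r : EuclideanSpace ℝ (Fin n) → EuclideanSpace ℝ (Fin n) → Prop)
    (hr : ∀ x y, r x y ↔ ∃ g ∈ G, x ∈ g ∧ y ∈ g)
    (husc : IsClosedMap (Quot.mk r))
    -- shrinkability:
    (hshrink : ∀ (𝒰 : Set (Set (Quot r))), (∀ U ∈ 𝒰, IsOpen U) → ⋃₀ 𝒰 = Set.univ →
      ∀ (𝒱 : Set (Set (EuclideanSpace ℝ (Fin n)))), (∀ V ∈ 𝒱, IsOpen V) →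
        ⋃₀ 𝒱 = Set.univ →
      ∃ h : EuclideanSpace ℝ (Fin n) ≃ₜ EuclideanSpace ℝ (Fin n),
        (∀ x, ∃ U ∈ 𝒰, x ∈ Quot.mk r ⁻¹' U ∧ h x ∈ Quot.mk r ⁻¹' U) ∧
        (∀ g ∈ G, ∃ V ∈ 𝒱, h '' g ⊆ V)) :
    ∀ g ∈ G, IsCellLike g := by
  intro g hg
  refine ⟨hcpt g hg, fun U hU hgU => ?_⟩
  obtain ⟨x₀, hx₀⟩ := hne g hg
  have hfiber : Quot.mk r ⁻¹' {Quot.mk r x₀} = g :=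
    preimage_quot_mk_singleton_of_pairwiseDisjoint (fun g hg g' hg' => hdisj g hg g' hg') hr
      hg hx₀
  have hclosed : IsClosed {Quot.mk r x₀} := by
    rw [← isQuotientMap_quot_mk.isClosed_preimage, hfiber]
    exact (hcpt g hg).isClosed
  have hshrink_ball : ∀ 𝒰 : Set (Set (Quot r)), (∀ O ∈ 𝒰, IsOpen O) → ⋃₀ 𝒰 = univ → ∀ ε > 0,
      ∃ h : EuclideanSpace ℝ (Fin n) ≃ₜ EuclideanSpace ℝ (Fin n),
        (∀ x, ∃ O ∈ 𝒰, Quot.mk r x ∈ O ∧ Quot.mk r (h x) ∈ O) ∧ ∃ z, h '' g ⊆ ball z ε := by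
    intro 𝒰 h𝒰 h𝒰cov ε hε
    obtain ⟨h, hclose, hsmall⟩ := hshrink 𝒰 h𝒰 h𝒰cov (range (ball · ε))
      (forall_mem_range.mpr fun _ => isOpen_ball)
      (eq_univ_of_forall fun x => mem_sUnion_of_mem (mem_ball_self hε) (mem_range_self x))
    obtain ⟨_, ⟨z, rfl⟩, hz⟩ := hsmall g hg
    exact ⟨h, hclose, z, hz⟩
  rw [← hfiber] at hshrink_ball
  obtain ⟨h, z, ε, hε, hgB, hBU⟩ := exists_homeomorph_fiber_subset_ball_preimage_subset
    continuous_quot_mk husc hclosed (hfiber ▸ hcpt g hg) hU (hfiber ▸ hgU) hshrink_ball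
  rw [hfiber] at hgB
  have := h.contractibleSpace_preimage_of_convex (convex_ball z ε) (nonempty_ball.mpr hε)
  exact nullhomotopic_inclusion_of_contractibleSpace (W := h ⁻¹' ball z ε)
    (fun x hx => hgB (mem_image_of_mem h hx)) hBU

/-- if `G` is a shrinkable upper semicontinuous decomposition of ℝⁿ
into compact sets, then each element of `G` is cell-like. -/
theorem shrinkable_elements_cellLike {n : ℕ}
    (G : Set (Set (EuclideanSpace ℝ (Fin n))))
    (hne : ∀ g ∈ G, g.Nonempty)
    (hcpt : ∀ g ∈ G, IsCompact g)
    (hcov : ∀ x, ∃ g ∈ G, x ∈ g)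
    (hdisj : ∀ g ∈ G, ∀ g' ∈ G, g ≠ g' → Disjoint g g')
    (r : EuclideanSpace ℝ (Fin n) → EuclideanSpace ℝ (Fin n) → Prop)
    (hr : ∀ x y, r x y ↔ ∃ g ∈ G, x ∈ g ∧ y ∈ g)
    (husc : IsClosedMap (Quot.mk r))
    -- shrinkability:
    (hshrink : ∀ (𝒰 : Set (Set (Quot r))), (∀ U ∈ 𝒰, IsOpen U) → ⋃₀ 𝒰 = Set.univ →
      ∀ (𝒱 : Set (Set (EuclideanSpace ℝ (Fin n)))), (∀ V ∈ 𝒱, IsOpen V) →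
        ⋃₀ 𝒱 = Set.univ →
      ∃ h : EuclideanSpace ℝ (Fin n) ≃ₜ EuclideanSpace ℝ (Fin n),
        (∀ x, ∃ U ∈ 𝒰, x ∈ Quot.mk r ⁻¹' U ∧ h x ∈ Quot.mk r ⁻¹' U) ∧
        (∀ g ∈ G, ∃ V ∈ 𝒱, h '' g ⊆ V)) :
    ∀ g ∈ G, IsCellLike g :=
  shrinkable_elements_cellLike_general G hne hcpt hdisj r hr husc hshrink
end
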